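/- Let η(x) = (5/3) tanh(3x/2) and Q³ = (5/2) sech²(3x/2). Then the virial potential A(x) = 1 + (1/2)(η'''/η') - (3/4)(η''/η')² - 4 (Q³η)'/η' equals 75/4 - 12 Q(x)³ for all x ∈ ℝ. -/

import Mathlib

noncomputable def sech (x : ℝ) : ℝ := 2 / (Real.exp x + Real.exp (-x))

/-- The quartic KdV soliton. -/
noncomputable def Q (x : ℝ) : ℝ := ((5 : ℝ) / 2) ^ ((1 : ℝ) / 3) * sech (3 * x / 2) ^ ((2 : ℝ) / 3)

/-- The virial weight `η(x) = (5/3) tanh(3x/2)`. -/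
noncomputable def eta (x : ℝ) : ℝ := (5 / 3) * Real.tanh (3 * x / 2)

/-- The virial potential `A`. -/
noncomputable def A (x : ℝ) : ℝ :=
  1 + (1 / 2) * (iteratedDeriv 3 eta x / deriv eta x)
    - (3 / 4) * (deriv (deriv eta) x / deriv eta x) ^ 2
    - 4 * (deriv (fun y => Q y ^ 3 * eta y) x / deriv eta x)

/-!
In the variable `T = tanh (3x/2)` every quantity is a polynomial, because `T' = (3/2)(1 - T²)` and
`Q³ = (5/2) sech² = (5/2)(1 - T²) = η'`. Differentiating gives `η'' = -(15/2) T (1 - T²)`,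
`η''' = -(45/4)(1 - T²)(1 - 3T²)` and `(Q³η)' = (25/4)(1 - T²)(1 - 3T²)`; after cancelling the
positive factor `1 - T²`, `A = 30 T² - 45/4 = 75/4 - 12 Q³`.
-/

open Real

lemma Real.one_sub_tanh_sq (x : ℝ) : 1 - tanh x ^ 2 = (cosh x ^ 2)⁻¹ := by
  have := cosh_pos x
  rw [tanh_eq_sinh_div_cosh]
  field_simp
  linarith [cosh_sq_sub_sinh_sq x]

lemma Real.hasDerivAt_tanh (x : ℝ) : HasDerivAt tanh (1 - tanh x ^ 2) x := by
  have h := (hasDerivAt_sinh x).div (hasDerivAt_cosh x) (cosh_pos x).ne'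
  have htanh : tanh = sinh / cosh := funext tanh_eq_sinh_div_cosh
  rw [one_sub_tanh_sq, htanh]
  refine h.congr_deriv ?_
  rw [← sq, ← sq, cosh_sq_sub_sinh_sq, one_div]

lemma HasDerivAt.tanh {f : ℝ → ℝ} {f' x : ℝ} (hf : HasDerivAt f f' x) :
    HasDerivAt (fun y => tanh (f y)) ((1 - tanh (f x) ^ 2) * f') x :=
  (hasDerivAt_tanh (f x)).comp x hf

lemma sech_eq_inv_cosh (x : ℝ) : sech x = (cosh x)⁻¹ := by
  rw [sech, cosh_eq, inv_div]

lemma sech_sq (x : ℝ) : sech x ^ 2 = 1 - tanh x ^ 2 := by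
  rw [sech_eq_inv_cosh, inv_pow, one_sub_tanh_sq]

lemma Q_cube (x : ℝ) : Q x ^ 3 = 5 / 2 * (1 - tanh (3 * x / 2) ^ 2) := by
  have hsech : 0 ≤ sech (3 * x / 2) := by rw [sech_eq_inv_cosh]; positivity
  rw [Q, mul_pow, ← rpow_mul_natCast (by norm_num), ← rpow_mul_natCast hsech, ← sech_sq]
  norm_num

lemma hasDerivAt_tanh_three_halves (x : ℝ) :
    HasDerivAt (fun y => tanh (3 * y / 2)) (3 / 2 * (1 - tanh (3 * x / 2) ^ 2)) x := by
  have h := ((hasDerivAt_id x).const_mul 3).div_const 2 |>.tanh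
  simp only [id, mul_one] at h
  exact h.congr_deriv (by ring)

lemma deriv_eta : deriv eta = fun x => 5 / 2 * (1 - tanh (3 * x / 2) ^ 2) := by
  funext x
  refine (((hasDerivAt_tanh_three_halves x).const_mul (5 / 3)).congr_deriv ?_).deriv
  ring

lemma deriv_deriv_eta :
    deriv (deriv eta) = fun x => -(15 / 2) * tanh (3 * x / 2) * (1 - tanh (3 * x / 2) ^ 2) := by
  funext x
  rw [deriv_eta]
  refine ((((hasDerivAt_tanh_three_halves x).pow 2).const_sub 1 |>.const_mul (5 / 2)).congr_deriv
    ?_).deriv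
  ring

lemma iteratedDeriv_three_eta (x : ℝ) : iteratedDeriv 3 eta x =
    -(45 / 4) * (1 - tanh (3 * x / 2) ^ 2) * (1 - 3 * tanh (3 * x / 2) ^ 2) := by
  have hT := hasDerivAt_tanh_three_halves x
  rw [iteratedDeriv_succ, iteratedDeriv_succ, iteratedDeriv_one, deriv_deriv_eta]
  refine (((hT.const_mul (-(15 / 2))).mul ((hT.pow 2).const_sub 1)).congr_deriv ?_).deriv
  simp only [Pi.pow_apply]
  ring

lemma deriv_Q_cube_mul_eta (x : ℝ) : deriv (fun y => Q y ^ 3 * eta y) x =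
    25 / 4 * (1 - tanh (3 * x / 2) ^ 2) * (1 - 3 * tanh (3 * x / 2) ^ 2) := by
  have hT := hasDerivAt_tanh_three_halves x
  simp only [Q_cube, eta]
  refine (((((hT.pow 2).const_sub 1).const_mul (5 / 2)).mul (hT.const_mul (5 / 3))).congr_deriv
    ?_).deriv
  simp only [Pi.pow_apply]
  ring

/-- `A(x) = 75/4 - 12 Q(x)³`. -/
theorem A_eq (x : ℝ) : A x = 75 / 4 - 12 * Q x ^ 3 := by
  have hη' : 1 - tanh (3 * x / 2) ^ 2 ≠ 0 := (sub_pos.2 (tanh_sq_lt_one _)).ne'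
  rw [A, iteratedDeriv_three_eta, deriv_deriv_eta, deriv_eta, deriv_Q_cube_mul_eta, Q_cube]
  field_simp
  ring
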